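/- arXiv:1805.03428 — 4 statements merged into one kernel-verified Lean document; each statement's English description precedes it below -/
import Mathlib

section
/- Let G be a graph and H an induced subgraph of G. Then for every s ∈ ℕ, the symbolic power of the edge ideal of H is contained in the symbolic power of the edge ideal of G: I(H)^(s) ⊆ I(G)^(s), where both ideals are viewed in the polynomial ring on the vertices of G. -/
open MvPolynomial

/-- The edge ideal of a graph. -/
noncomputable def edgeIdeal (K : Type*) [Field K] {V : Type*} (G : SimpleGraph V) :
    Ideal (MvPolynomial V K) :=
  Ideal.span {f | ∃ u v, G.Adj u v ∧ f = X u * X v}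

/-- The `s`-th symbolic power: the intersection of `s`-th powers of the
associated primes of `R/I`. -/
noncomputable def symbolicPower {R : Type*} [CommRing R] (I : Ideal R) (s : ℕ) : Ideal R :=
  ⨅ p ∈ associatedPrimes R (R ⧸ I), p ^ s

/-- `G` has `x 0, x 1, ..., x (2n)` as its unique cycle. -/
def HasUniqueOddCycle {V : Type*} (G : SimpleGraph V) (n : ℕ) (x : Fin (2 * n + 1) → V) : Prop :=
  1 ≤ n ∧ Function.Injective x ∧ (∀ i, G.Adj (x i) (x (i + 1))) ∧
    ∀ (v : V) (c : G.Walk v v), c.IsCycle →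
      {e | e ∈ c.edges} = Set.range (fun i : Fin (2 * n + 1) => s(x i, x (i + 1)))

/-!
Every associated prime `p` of `J` contains `J ⊇ I`, hence contains a minimal prime `q` of `I`.
In a noetherian ring minimal primes are associated, so `I^(s) ≤ q ^ s ≤ p ^ s`. Thus symbolic
powers are monotone, and the ideal of the edges of `G` inside `W` is contained in `I(G)`.
-/

section SymbolicPower

variable {R : Type*} [CommRing R]

theorem Ideal.le_of_mem_associatedPrimes_quotient {I p : Ideal R}
    (hp : p ∈ associatedPrimes R (R ⧸ I)) : I ≤ p := by
  simpa only [Submodule.annihilator_top, Ideal.annihilator_quotient] using hp.annihilator_le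

theorem Ideal.minimalPrimes_subset_associatedPrimes_quotient [IsNoetherianRing R] (I : Ideal R) :
    I.minimalPrimes ⊆ associatedPrimes R (R ⧸ I) := by
  simpa only [Ideal.annihilator_quotient] using
    Module.associatedPrimes.minimalPrimes_annihilator_subset_associatedPrimes R (R ⧸ I)

theorem symbolicPower_mono [IsNoetherianRing R] {I J : Ideal R} (hIJ : I ≤ J) (s : ℕ) :
    symbolicPower I s ≤ symbolicPower J s := by
  refine le_iInf₂ fun p hp => ?_
  have : p.IsPrime := hp.isPrime
  obtain ⟨q, hqI, hqp⟩ :=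
    Ideal.exists_minimalPrimes_le (hIJ.trans (Ideal.le_of_mem_associatedPrimes_quotient hp))
  calc symbolicPower I s ≤ q ^ s :=
        iInf₂_le q (Ideal.minimalPrimes_subset_associatedPrimes_quotient I hqI)
    _ ≤ p ^ s := Ideal.pow_right_mono hqp s

end SymbolicPower

theorem span_edges_within_le_edgeIdeal (K : Type*) [Field K] {V : Type*} (G : SimpleGraph V)
    (W : Set V) :
    Ideal.span {f | ∃ u v, G.Adj u v ∧ u ∈ W ∧ v ∈ W ∧ f = X u * X v} ≤ edgeIdeal K G :=
  Ideal.span_mono fun _ ⟨u, v, huv, _, _, hf⟩ => ⟨u, v, huv, hf⟩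

theorem symbolicPower_induced_subgraph_le {K : Type*} [Field K] {V : Type*} [Fintype V]
    (G : SimpleGraph V) (W : Set V)
    (IG IH : Ideal (MvPolynomial V K))
    (hIG : IG = edgeIdeal K G)
    (hIH : IH = Ideal.span {f | ∃ u v, G.Adj u v ∧ u ∈ W ∧ v ∈ W ∧ f = X u * X v})
    (s : ℕ) :
    symbolicPower IH s ≤ symbolicPower IG s := by
  subst hIG hIH
  exact symbolicPower_mono (span_edges_within_le_edgeIdeal K G W) s
end

section
/- Let I = I(C_{2n+1}) be the edge ideal of the odd cycle on vertices x_1,...,x_{2n+1} and w = x_1⋯x_{2n+1}. Then for every vertex x_j, the monomial x_j·w lies in I^{n+1}. -/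
open MvPolynomial Finset Fin.NatCast Fin.CommRing

private lemma prod_range_two_mul' {M : Type*} [CommMonoid M] (h : ℕ → M) (n : ℕ) :
    ∏ m ∈ range (2 * n), h m = ∏ k ∈ range n, (h (2 * k) * h (2 * k + 1)) := by
  induction n with
  | zero => simp
  | succ n ih =>
    rw [show 2 * (n + 1) = 2 * n + 1 + 1 by ring, prod_range_succ, prod_range_succ, ih,
      prod_range_succ, mul_assoc]

private lemma prod_mem_pow' {R : Type*} [CommRing R] (I : Ideal R) (f : ℕ → R) (m : ℕ)
    (hf : ∀ k < m, f k ∈ I) : ∏ k ∈ range m, f k ∈ I ^ m := by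
  induction m with
  | zero => simp
  | succ m ih =>
    rw [prod_range_succ, pow_succ]
    exact Ideal.mul_mem_mul (ih fun k hk => hf k (hk.trans (Nat.lt_succ_self m)))
      (hf m (Nat.lt_succ_self m))

theorem vertex_mul_cycleProduct_mem_pow {K : Type*} [Field K] (n : ℕ) (hn : 1 ≤ n)
    (I : Ideal (MvPolynomial (Fin (2 * n + 1)) K))
    (hI : I = Ideal.span {f | ∃ i : Fin (2 * n + 1), f = X i * X (i + 1)})
    (j : Fin (2 * n + 1)) :
    X j * ∏ i, X i ∈ I ^ (n + 1) := by
  have e1 : (∏ i : Fin (2 * n + 1), (X i : MvPolynomial (Fin (2 * n + 1)) K)) =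
      ∏ m ∈ range (2 * n + 1), X (j - 1 + (m : Fin (2 * n + 1))) := by
    rw [← Fin.prod_univ_eq_prod_range (fun m => (X (j - 1 + (m : Fin (2 * n + 1))) :
      MvPolynomial (Fin (2 * n + 1)) K)) (2 * n + 1)]
    simp only [Fin.cast_val_eq_self]
    exact (Fintype.prod_equiv (Equiv.addLeft (j - 1)) _ _ (fun i => rfl)).symm
  have key : (X j * ∏ i, X i : MvPolynomial (Fin (2 * n + 1)) K) =
      (X (j - 1) * X j) *
        ∏ k ∈ range n, (X (j + ((2 * k : ℕ) : Fin (2 * n + 1))) *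
          X (j + ((2 * k + 1 : ℕ) : Fin (2 * n + 1)))) := by
    rw [e1, prod_range_succ']
    have h2 : ∀ m : ℕ, (X (j - 1 + ((m + 1 : ℕ) : Fin (2 * n + 1))) :
        MvPolynomial (Fin (2 * n + 1)) K) = X (j + (m : Fin (2 * n + 1))) := by
      intro m; congr 1; push_cast; ring
    simp only [h2, Nat.cast_zero, add_zero]
    rw [prod_range_two_mul' (fun m => (X (j + (m : Fin (2 * n + 1))) :
      MvPolynomial (Fin (2 * n + 1)) K)) n]
    ring
  rw [key, pow_succ']
  refine Ideal.mul_mem_mul ?_ (prod_mem_pow' I _ n ?_)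
  · rw [hI]
    exact Ideal.subset_span ⟨j - 1, by rw [sub_add_cancel]⟩
  · intro k hk
    rw [hI]
    refine Ideal.subset_span ⟨j + ((2 * k : ℕ) : Fin (2 * n + 1)), ?_⟩
    congr 1
    push_cast
    ring
end

section
/- Let I = I(C_{2n+1}) be the edge ideal of the odd cycle, w = x_1⋯x_{2n+1}, and m the maximal homogeneous ideal. For any s ≥ i(n+1) with i ≥ 1, one has I^{s-i(n+1)} ∩ (I^s : w^i) = I^{s-i(n+1)}·m^i. -/
open MvPolynomial Finsupp Pointwise

namespace OddCycleAux

variable {σ : Type*} {K : Type*} [Field K]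

noncomputable def mon (u : σ →₀ ℕ) : MvPolynomial σ K := monomial u 1

/-- sums of `a` elements of `G` -/
def msum (G : Set (σ →₀ ℕ)) (a : ℕ) : Set (σ →₀ ℕ) :=
  {u | ∃ l : Multiset (σ →₀ ℕ), Multiset.card l = a ∧ (∀ x ∈ l, x ∈ G) ∧ l.sum = u}

lemma image_mon_mul (S T : Set (σ →₀ ℕ)) :
    (mon '' S : Set (MvPolynomial σ K)) * (mon '' T) = mon '' (S + T) := by
  ext x
  constructor
  · rintro ⟨-, ⟨u, hu, rfl⟩, -, ⟨v, hv, rfl⟩, rfl⟩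
    exact ⟨u + v, ⟨u, hu, v, hv, rfl⟩, by simp [mon, monomial_mul]⟩
  · rintro ⟨-, ⟨u, hu, v, hv, rfl⟩, rfl⟩
    exact ⟨mon u, ⟨u, hu, rfl⟩, mon v, ⟨v, hv, rfl⟩, by simp [mon, monomial_mul]⟩

lemma span_mon_pow (G : Set (σ →₀ ℕ)) (a : ℕ) :
    (Ideal.span (mon '' G) : Ideal (MvPolynomial σ K)) ^ a
      = Ideal.span (mon '' msum G a) := by
  classical
  induction a with
  | zero =>
      have h0 : msum (σ := σ) G 0 = {0} := by
        ext u
        constructor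
        · rintro ⟨l, hc, -, rfl⟩
          simp [Multiset.card_eq_zero.mp hc]
        · rintro rfl
          exact ⟨0, by simp⟩
      rw [pow_zero, h0, Set.image_singleton]
      rw [show (mon 0 : MvPolynomial σ K) = 1 by simp [mon, monomial_zero']]
      rw [Ideal.span_singleton_one, Ideal.one_eq_top]
  | succ a ih =>
      rw [pow_succ, ih, Ideal.span_mul_span', image_mon_mul]
      have : msum G a + G = msum G (a + 1) := by
        ext u
        constructor
        · rintro ⟨v, ⟨l, hc, hG, rfl⟩, e, he, rfl⟩
          refine ⟨e ::ₘ l, by simp [hc], ?_, by simp [add_comm]⟩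
          intro x hx
          rcases Multiset.mem_cons.mp hx with h | h
          · exact h ▸ he
          · exact hG x h
        · rintro ⟨l, hc, hG, rfl⟩
          have hne : l ≠ 0 := by
            intro h; rw [h] at hc; simp at hc
          obtain ⟨x, hx⟩ := Multiset.exists_mem_of_ne_zero hne
          obtain ⟨t, rfl⟩ := Multiset.exists_cons_of_mem hx
          refine ⟨t.sum, ⟨t, ?_, ?_, rfl⟩, x, hG x hx, ?_⟩
          · simpa using hc
          · exact fun y hy => hG y (Multiset.mem_cons_of_mem hy)
          · rw [Multiset.sum_cons, add_comm]
      rw [this]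

lemma msum_add_mem {G : Set (σ →₀ ℕ)} {u v : σ →₀ ℕ} {a b : ℕ}
    (hu : u ∈ msum G a) (hv : v ∈ msum G b) : u + v ∈ msum G (a + b) := by
  obtain ⟨l, hl, hlG, rfl⟩ := hu
  obtain ⟨m, hm, hmG, rfl⟩ := hv
  refine ⟨l + m, by simp [hl, hm], ?_, by simp⟩
  intro x hx
  rcases Multiset.mem_add.mp hx with h | h
  · exact hlG x h
  · exact hmG x h

section DegGeneral

variable [Fintype σ]

def deg (u : σ →₀ ℕ) : ℕ := ∑ j, u j

lemma deg_add (u v : σ →₀ ℕ) : deg (u + v) = deg u + deg v := by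
  simp [deg, Finset.sum_add_distrib]

lemma deg_single (j : σ) : deg (Finsupp.single j 1) = 1 := by
  classical
  simp [deg, Finsupp.single_apply]

lemma deg_mono {u v : σ →₀ ℕ} (h : u ≤ v) : deg u ≤ deg v :=
  Finset.sum_le_sum fun j _ => (Finsupp.le_def.mp h) j

lemma deg_smul (i : ℕ) (u : σ →₀ ℕ) : deg (i • u) = i * deg u := by
  simp [deg, Finset.mul_sum]

lemma deg_finset_sum {α : Type*} (F : Finset α) (f : α → (σ →₀ ℕ)) :
    deg (∑ x ∈ F, f x) = ∑ x ∈ F, deg (f x) := by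
  simp only [deg, Finsupp.finset_sum_apply]
  rw [Finset.sum_comm]

/-- every finsupp of degree at least `i` has a sub-finsupp which is a sum of `i` singles -/
lemma exists_sub_of_le_deg :
    ∀ (i : ℕ) (u : σ →₀ ℕ), i ≤ deg u →
      ∃ e ∈ msum (Set.range (fun j : σ => Finsupp.single j (1 : ℕ))) i, e ≤ u
  | 0, u, _ => ⟨0, ⟨0, by simp⟩, zero_le⟩
  | (i + 1), u, h => by
    classical
    have h1 : (∑ j, u j) ≠ 0 := by
      have : deg u ≠ 0 := by omega
      simpa [deg] using this
    obtain ⟨j, -, hj⟩ := Finset.exists_ne_zero_of_sum_ne_zero h1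
    have hle : Finsupp.single j 1 ≤ u := Finsupp.single_le_iff.mpr (by omega)
    have hdeg : i ≤ deg (u - Finsupp.single j 1) := by
      have h2 := deg_add (u - Finsupp.single j 1) (Finsupp.single j 1)
      rw [tsub_add_cancel_of_le hle, deg_single] at h2
      omega
    obtain ⟨e, ⟨l, hc, hG, rfl⟩, hle'⟩ :=
      exists_sub_of_le_deg i (u - Finsupp.single j 1) hdeg
    refine ⟨Finsupp.single j 1 + l.sum, ⟨Finsupp.single j 1 ::ₘ l, by simp [hc], ?_, by simp⟩, ?_⟩
    · intro x hx
      rcases Multiset.mem_cons.mp hx with h' | h'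
      · exact h' ▸ ⟨j, rfl⟩
      · exact hG x h'
    · rw [Finsupp.le_def]
      intro k
      have e1 := (Finsupp.le_def.mp hle') k
      have e2 := (Finsupp.le_def.mp hle) k
      rw [Finsupp.tsub_apply] at e1
      simp only [Finsupp.add_apply]
      omega

end DegGeneral

lemma mul_monomial_mem_span_iff (f : MvPolynomial σ K) (c : σ →₀ ℕ) (S : Set (σ →₀ ℕ)) :
    f * monomial c (1 : K) ∈ Ideal.span ((fun s => monomial s (1 : K)) '' S)
      ↔ ∀ u ∈ f.support, ∃ v ∈ S, v ≤ u + c := by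
  rw [mem_ideal_span_monomial_image]
  constructor
  · intro h u hu
    refine h (u + c) ?_
    rw [MvPolynomial.mem_support_iff, coeff_mul_monomial, mul_one]
    exact MvPolynomial.mem_support_iff.mp hu
  · intro h y hy
    rw [MvPolynomial.mem_support_iff, coeff_mul_monomial'] at hy
    split_ifs at hy with hc
    · rw [mul_one] at hy
      obtain ⟨v, hv, hvle⟩ := h (y - c) (MvPolynomial.mem_support_iff.mpr hy)
      refine ⟨v, hv, hvle.trans ?_⟩
      rw [tsub_add_cancel_of_le hc]
    · exact absurd rfl hy

/-! ### Odd cycle specific combinatorics -/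

noncomputable def edge (n : ℕ) (j : Fin (2 * n + 1)) : Fin (2 * n + 1) →₀ ℕ :=
  Finsupp.single j 1 + Finsupp.single (j + 1) 1

noncomputable def ones (n : ℕ) : Fin (2 * n + 1) →₀ ℕ := ∑ j, Finsupp.single j 1

lemma deg_edge (n : ℕ) (j : Fin (2 * n + 1)) : deg (edge n j) = 2 := by
  simp [edge, deg_add, deg_single]

lemma deg_ones (n : ℕ) : deg (ones n) = 2 * n + 1 := by
  rw [ones, deg_finset_sum]
  simp [deg_single]

lemma deg_msum_edge {n a : ℕ} {u : Fin (2 * n + 1) →₀ ℕ}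
    (h : u ∈ msum (Set.range (edge n)) a) : deg u = 2 * a := by
  obtain ⟨l, hc, hG, rfl⟩ := h
  subst hc
  induction l using Multiset.induction with
  | empty => simp [deg]
  | cons x t ih =>
      obtain ⟨j, rfl⟩ := hG x (by simp)
      have ht := ih fun y hy => hG y (by simp [hy])
      simp only [Multiset.sum_cons, Multiset.card_cons, deg_add, deg_edge, ht]
      ring

lemma sum_range_two_mul {M : Type*} [AddCommMonoid M] (g : ℕ → M) (m : ℕ) :
    ∑ r ∈ Finset.range (2 * m), g r = ∑ t ∈ Finset.range m, (g (2 * t) + g (2 * t + 1)) := by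
  induction m with
  | zero => simp
  | succ m ih =>
      have h2 : 2 * (m + 1) = (2 * m + 1) + 1 := by ring
      rw [h2, Finset.sum_range_succ, Finset.sum_range_succ, ih, Finset.sum_range_succ]
      rw [add_assoc]

open Fin.NatCast in
lemma cover (n : ℕ) (j : Fin (2 * n + 1)) :
    Finsupp.single j 1 + ones n ∈ msum (Set.range (edge n)) (n + 1) := by
  refine ⟨(Finset.range (n + 1)).val.map (fun t => edge n (j + (2 * t : ℕ))), by simp, ?_, ?_⟩
  · intro x hx
    simp only [Multiset.mem_map] at hx
    obtain ⟨t, -, rfl⟩ := hx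
    exact ⟨_, rfl⟩
  · rw [← Finset.sum_eq_multiset_sum]
    have hedge : ∀ t : ℕ, edge n (j + (2 * t : ℕ))
        = Finsupp.single (j + ((2 * t : ℕ) : Fin (2 * n + 1))) 1
          + Finsupp.single (j + ((2 * t + 1 : ℕ) : Fin (2 * n + 1))) 1 := by
      intro t
      have : (j + ((2 * t : ℕ) : Fin (2 * n + 1))) + 1
          = j + ((2 * t + 1 : ℕ) : Fin (2 * n + 1)) := by
        push_cast
        abel
      rw [edge, this]
    calc ∑ t ∈ Finset.range (n + 1), edge n (j + (2 * t : ℕ))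
        = ∑ t ∈ Finset.range (n + 1),
            (Finsupp.single (j + ((2 * t : ℕ) : Fin (2 * n + 1))) 1
              + Finsupp.single (j + ((2 * t + 1 : ℕ) : Fin (2 * n + 1))) 1) := by
          exact Finset.sum_congr rfl fun t _ => hedge t
      _ = ∑ r ∈ Finset.range (2 * (n + 1)), Finsupp.single (j + (r : Fin (2 * n + 1))) 1 := by
          rw [sum_range_two_mul (fun r => Finsupp.single (j + (r : Fin (2 * n + 1))) 1) (n + 1)]
      _ = Finsupp.single j 1 + ones n := by
          have h2 : 2 * (n + 1) = (2 * n + 1) + 1 := by ring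
          rw [h2, Finset.sum_range_succ]
          have hlast : ((2 * n + 1 : ℕ) : Fin (2 * n + 1)) = 0 := by
            exact_mod_cast Fin.natCast_self (2 * n + 1)
          rw [hlast, add_zero]
          have hmain : ∑ r ∈ Finset.range (2 * n + 1),
              Finsupp.single (j + (r : Fin (2 * n + 1))) 1 = ones n := by
            rw [← Fin.sum_univ_eq_sum_range (fun r => Finsupp.single (j + (r : Fin (2 * n + 1))) 1)]
            rw [ones]
            refine Fintype.sum_equiv (Equiv.addLeft j) _ _ ?_
            intro x
            simp [Fin.cast_val_eq_self]
          rw [hmain]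
          exact add_comm _ _

lemma single_msum_add_smul_ones {n : ℕ} {e : Fin (2 * n + 1) →₀ ℕ} {i : ℕ}
    (he : e ∈ msum (Set.range (fun j : Fin (2 * n + 1) => Finsupp.single j (1 : ℕ))) i) :
    e + i • ones n ∈ msum (Set.range (edge n)) (i * (n + 1)) := by
  obtain ⟨l, hc, hG, rfl⟩ := he
  subst hc
  induction l using Multiset.induction with
  | empty => exact ⟨0, by simp⟩
  | cons x t ih =>
      obtain ⟨j, rfl⟩ := hG x (by simp)
      have ht := ih fun y hy => hG y (by simp [hy])
      have hcov := cover n j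
      have harith : (Multiset.card (Finsupp.single j 1 ::ₘ t)) * (n + 1)
          = (n + 1) + Multiset.card t * (n + 1) := by
        simp [Multiset.card_cons]; ring
      have hsum : (Finsupp.single j 1 ::ₘ t).sum
            + (Multiset.card (Finsupp.single j 1 ::ₘ t)) • ones n
          = (Finsupp.single j 1 + ones n) + (t.sum + Multiset.card t • ones n) := by
        simp only [Multiset.sum_cons, Multiset.card_cons, succ_nsmul]
        abel
      rw [hsum, harith]
      exact msum_add_mem hcov ht

end OddCycleAux

open OddCycleAux

theorem inf_colon_eq_mul_maximalIdeal_pow {K : Type*} [Field K] (n : ℕ) (hn : 1 ≤ n)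
    (I : Ideal (MvPolynomial (Fin (2 * n + 1)) K))
    (hI : I = Ideal.span {f | ∃ i : Fin (2 * n + 1), f = X i * X (i + 1)})
    (s i : ℕ) (hi : 1 ≤ i) (hs : i * (n + 1) ≤ s) :
    I ^ (s - i * (n + 1)) ⊓ (I ^ s).colon ((Ideal.span {(∏ t, X t) ^ i} : Ideal (MvPolynomial (Fin (2 * n + 1)) K)) :
        Set (MvPolynomial (Fin (2 * n + 1)) K))
      = I ^ (s - i * (n + 1)) * (Ideal.span (Set.range X)) ^ i := by
  classical
  set a := s - i * (n + 1) with ha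
  have hsa : s = a + i * (n + 1) := by omega
  have hX : ∀ j : Fin (2 * n + 1), (X j : MvPolynomial (Fin (2 * n + 1)) K)
      = monomial (Finsupp.single j 1) 1 := by
    intro j
    rw [← pow_one (X j), X_pow_eq_monomial]
  -- rewrite I as a monomial ideal
  have hXX : ∀ j : Fin (2 * n + 1),
      (X j : MvPolynomial (Fin (2 * n + 1)) K) * X (j + 1) = mon (edge n j) := by
    intro j
    rw [hX, hX, mon, edge, monomial_mul, one_mul]
  have hIm : I = Ideal.span (mon '' Set.range (edge n)) := by
    rw [hI]
    congr 1
    ext f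
    constructor
    · rintro ⟨j, rfl⟩
      exact ⟨edge n j, ⟨j, rfl⟩, (hXX j).symm⟩
    · rintro ⟨-, ⟨j, rfl⟩, rfl⟩
      exact ⟨j, (hXX j).symm⟩
  have hm : Ideal.span (Set.range (X : Fin (2 * n + 1) → MvPolynomial (Fin (2 * n + 1)) K))
      = Ideal.span (mon '' Set.range (fun j : Fin (2 * n + 1) => Finsupp.single j (1 : ℕ))) := by
    congr 1
    ext f
    constructor
    · rintro ⟨j, rfl⟩
      exact ⟨Finsupp.single j 1, ⟨j, rfl⟩, (hX j).symm⟩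
    · rintro ⟨-, ⟨j, rfl⟩, rfl⟩
      exact ⟨j, hX j⟩
  -- the product of all variables
  have hprodF : ∀ F : Finset (Fin (2 * n + 1)),
      (∏ t ∈ F, (X t : MvPolynomial (Fin (2 * n + 1)) K))
        = monomial (∑ t ∈ F, Finsupp.single t 1) 1 := by
    intro F
    induction F using Finset.induction with
    | empty => simp [monomial_zero']
    | insert _ _ hnotmem ih =>
        rw [Finset.prod_insert hnotmem, Finset.sum_insert hnotmem, ih, hX, monomial_mul, one_mul]
  have hw : (∏ t, (X t : MvPolynomial (Fin (2 * n + 1)) K)) ^ i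
      = monomial (i • ones n) 1 := by
    rw [hprodF Finset.univ, monomial_pow, one_pow, ones]
  rw [hIm, hm, hw, span_mon_pow, span_mon_pow, span_mon_pow, Ideal.span_mul_span',
    image_mon_mul]
  ext f
  rw [Submodule.mem_inf, Ideal.mem_colon_span_singleton]
  show _ ∧ f * monomial (i • ones n) (1 : K) ∈
      Ideal.span ((fun u => monomial u (1 : K)) '' msum (Set.range (edge n)) s) ↔ _
  rw [mul_monomial_mem_span_iff]
  show f ∈ Ideal.span ((fun u => monomial u (1 : K)) '' msum (Set.range (edge n)) a) ∧ _
      ↔ f ∈ Ideal.span ((fun u => monomial u (1 : K)) ''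
          (msum (Set.range (edge n)) a + msum (Set.range fun j => Finsupp.single j 1) i))
  rw [mem_ideal_span_monomial_image, mem_ideal_span_monomial_image]
  constructor
  · rintro ⟨h1, h2⟩ u hu
    obtain ⟨d, hd, hdle⟩ := h1 u hu
    obtain ⟨v, hv, hvle⟩ := h2 u hu
    -- degree bookkeeping
    have hdegv : deg v = 2 * s := deg_msum_edge hv
    have hdegd : deg d = 2 * a := deg_msum_edge hd
    have hdegu : 2 * s ≤ deg u + i * (2 * n + 1) := by
      have := deg_mono hvle
      rw [hdegv, deg_add, deg_smul, deg_ones] at this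
      exact this
    have hkey : 2 * a + i ≤ deg u := by
      have e1 : 2 * s = 2 * a + i * (2 * n + 1) + i := by rw [hsa]; ring
      omega
    have hdeg' : i ≤ deg (u - d) := by
      have h3 := deg_add (u - d) d
      rw [tsub_add_cancel_of_le hdle] at h3
      omega
    obtain ⟨e, he, hele⟩ := exists_sub_of_le_deg i (u - d) hdeg'
    refine ⟨d + e, ⟨d, hd, e, he, rfl⟩, ?_⟩
    rw [Finsupp.le_def]
    intro k
    have e1 := (Finsupp.le_def.mp hele) k
    have e2 := (Finsupp.le_def.mp hdle) k
    rw [Finsupp.tsub_apply] at e1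
    simp only [Finsupp.add_apply]
    omega
  · intro h
    constructor
    · intro u hu
      obtain ⟨z, ⟨d, hd, e, he, rfl⟩, hzle⟩ := h u hu
      refine ⟨d, hd, le_trans ?_ hzle⟩
      rw [Finsupp.le_def]
      intro k
      simp only [Finsupp.add_apply]
      omega
    · intro u hu
      obtain ⟨z, ⟨d, hd, e, he, rfl⟩, hzle⟩ := h u hu
      have hv : d + e + i • ones n ∈ msum (Set.range (edge n)) s := by
        have h1 := msum_add_mem hd (single_msum_add_smul_ones he)
        rw [← hsa] at h1
        rw [add_assoc]
        exact h1
      exact ⟨d + e + i • ones n, hv, add_le_add_left hzle _⟩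
end

section
/- Let G be a unicyclic graph whose unique cycle C_{2n+1} = (x_1,...,x_{2n+1}) is dominating (every vertex outside the cycle is adjacent to a cycle vertex). Let V(G) = {x_1,...,x_{2n+1},y_1,...,y_t} and I = I(G). Then for all k ≥ 1, the colon ideal I^{kn+k} : (x_1⋯x_{2n+1})^k equals the k-th power of the maximal homogeneous ideal (x_1,...,x_{2n+1},y_1,...,y_t)^k. -/
open MvPolynomial

section Aux
variable {R : Type*} [CommRing R] {V : Type*}

lemma aux_prod_range_mem_pow (I : Ideal R) (N : ℕ) (h : ℕ → R)
    (hmem : ∀ m < N, h m ∈ I) : ∏ m ∈ Finset.range N, h m ∈ I ^ N := by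
  induction N with
  | zero => simp
  | succ N ih =>
    rw [Finset.prod_range_succ, pow_succ]
    exact Ideal.mul_mem_mul (ih fun m hm => hmem m (hm.trans (Nat.lt_succ_self N)))
      (hmem N (Nat.lt_succ_self N))

lemma aux_prod_range_two_mul (N : ℕ) (h : ℕ → R) :
    ∏ m ∈ Finset.range (2 * N), h m = ∏ m ∈ Finset.range N, (h (2*m) * h (2*m+1)) := by
  induction N with
  | zero => simp
  | succ N ih =>
    rw [show 2*(N+1) = (2*N+1)+1 by ring, Finset.prod_range_succ, Finset.prod_range_succ,
      ih, Finset.prod_range_succ]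
    ring

lemma aux_deg_zero (d : V →₀ ℕ) (h : d.sum (fun _ m => m) = 0) : d = 0 := by
  ext a
  by_contra ha
  have : a ∈ d.support := Finsupp.mem_support_iff.2 (by simpa using ha)
  have := Finset.sum_eq_zero_iff.1 h a this
  simp at this; exact ha (by simpa using this)

lemma aux_deg_add (d e : V →₀ ℕ) :
    (d + e).sum (fun _ m => m) = d.sum (fun _ m => m) + e.sum (fun _ m => m) :=
  Finsupp.sum_add_index' (fun _ => rfl) (fun _ _ _ => rfl)

lemma aux_deg_mono {d e : V →₀ ℕ} (h : e ≤ d) :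
    e.sum (fun _ m => m) ≤ d.sum (fun _ m => m) := by
  have : e + (d - e) = d := by
    ext a; have := Finsupp.le_def.1 h a; simp [Nat.add_sub_cancel' this]
  calc e.sum (fun _ m => m) ≤ (e + (d-e)).sum (fun _ m => m) := by
        rw [aux_deg_add]; omega
    _ = _ := by rw [this]

lemma aux_exists_le_deg (s : ℕ) : ∀ (d : V →₀ ℕ), s ≤ d.sum (fun _ m => m) →
    ∃ e ≤ d, e.sum (fun _ m => m) = s := by
  induction s with
  | zero => exact fun d _ => ⟨0, zero_le, by simp⟩
  | succ s ih =>
    intro d hd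
    obtain ⟨e, he, hes⟩ := ih d (by omega)
    have hne : e ≠ d := fun h => by subst h; omega
    have : ∃ i, e i < d i := by
      by_contra h
      push_neg at h
      exact hne (le_antisymm he (Finsupp.le_def.2 h))
    obtain ⟨i, hi⟩ := this
    refine ⟨e + Finsupp.single i 1, ?_, ?_⟩
    · refine Finsupp.le_def.2 fun j => ?_
      rcases eq_or_ne j i with rfl | hj
      · simpa using hi
      · simpa [Finsupp.single_apply, hj.symm] using Finsupp.le_def.1 he j
    · rw [aux_deg_add, hes]; simp

end Aux

section Aux2
variable {R : Type*} [CommRing R] {V : Type*}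

lemma aux_X_eq (u : V) : (X u : MvPolynomial V R) = monomial (Finsupp.single u 1) 1 := rfl

lemma aux_span_range_X_pow (s : ℕ) :
    (Ideal.span (Set.range (X : V → MvPolynomial V R))) ^ s
      = Ideal.span ((fun d => monomial d (1:R)) ''
          {d : V →₀ ℕ | d.sum (fun _ m => m) = s}) := by
  induction s with
  | zero =>
    have hset : {d : V →₀ ℕ | d.sum (fun _ m => m) = 0} = {0} := by
      ext d
      simp only [Set.mem_setOf_eq, Set.mem_singleton_iff]
      exact ⟨aux_deg_zero d, fun h => by subst h; simp⟩
    rw [pow_zero, hset]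
    simp [Ideal.one_eq_top, Ideal.span_singleton_one]
  | succ s ih =>
    rw [pow_succ, ih, Ideal.span_mul_span']
    congr 1
    ext f
    constructor
    · rintro ⟨a, ⟨d, hd, rfl⟩, b, ⟨u, rfl⟩, rfl⟩
      refine ⟨d + Finsupp.single u 1, ?_, ?_⟩
      · simp only [Set.mem_setOf_eq] at hd ⊢
        rw [aux_deg_add, hd]
        simp
      · simp [aux_X_eq, monomial_mul]
    · rintro ⟨e, he, rfl⟩
      simp only [Set.mem_setOf_eq] at he
      have hne : e ≠ 0 := by
        intro h; subst h; simp at he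
      obtain ⟨u, hu⟩ := Finsupp.ne_iff.1 hne
      simp only [Finsupp.coe_zero, Pi.zero_apply] at hu
      have hle : Finsupp.single u 1 ≤ e := by
        refine Finsupp.le_def.2 fun j => ?_
        rcases eq_or_ne j u with rfl | hj
        · simpa using Nat.one_le_iff_ne_zero.2 hu
        · simp [Finsupp.single_apply, hj.symm]
      have heq : (e - Finsupp.single u 1) + Finsupp.single u 1 = e := by
        ext a; have := Finsupp.le_def.1 hle a
        simp [Nat.sub_add_cancel this]
      have hsum : (e - Finsupp.single u 1).sum (fun _ m => m) = s := by
        have := aux_deg_add (e - Finsupp.single u 1) (Finsupp.single u 1)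
        rw [heq] at this
        simp only [Finsupp.sum_single_index] at this
        omega
      refine ⟨monomial (e - Finsupp.single u 1) 1, ⟨_, hsum, rfl⟩, X u, ⟨u, rfl⟩, ?_⟩
      show monomial _ 1 * monomial _ 1 = monomial e 1
      rw [monomial_mul, heq, mul_one]
end Aux2

section Aux3
variable {R : Type*} [CommRing R] {V : Type*}

lemma aux_mem_max_pow_iff (s : ℕ) (f : MvPolynomial V R) :
    f ∈ (Ideal.span (Set.range (X : V → MvPolynomial V R))) ^ s ↔
      ∀ d ∈ f.support, s ≤ d.sum (fun _ m => m) := by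
  rw [aux_span_range_X_pow, mem_ideal_span_monomial_image]
  constructor
  · intro h d hd
    obtain ⟨e, he, hle⟩ := h d hd
    exact he ▸ aux_deg_mono hle
  · intro h d hd
    obtain ⟨e, hle, hes⟩ := aux_exists_le_deg s d (h d hd)
    exact ⟨e, hes, hle⟩

lemma aux_prod_X {ι : Type*} (s : Finset ι) (g : ι → V) :
    ∏ i ∈ s, (X (g i) : MvPolynomial V R)
      = monomial (∑ i ∈ s, Finsupp.single (g i) 1) (1:R) := by
  classical
  induction s using Finset.induction_on with
  | empty => simp [monomial_zero', C_1]
  | insert _ _ hni ih =>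
    rw [Finset.prod_insert hni, Finset.sum_insert hni, ih, aux_X_eq, monomial_mul, one_mul]

lemma aux_deg_smul (k : ℕ) (d : V →₀ ℕ) :
    (k • d).sum (fun _ m => m) = k * d.sum (fun _ m => m) := by
  induction k with
  | zero => simp
  | succ k ih => rw [succ_nsmul, aux_deg_add, ih]; ring

end Aux3

theorem colon_pow_cycleProduct_eq_maximalIdeal_pow {K : Type*} [Field K] (n t : ℕ)
    (G : SimpleGraph (Fin (2 * n + 1) ⊕ Fin t))
    (huni : HasUniqueOddCycle G n Sum.inl)
    (hdom : ∀ j : Fin t, ∃ i : Fin (2 * n + 1), G.Adj (Sum.inl i) (Sum.inr j))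
    (I : Ideal (MvPolynomial (Fin (2 * n + 1) ⊕ Fin t) K)) (hI : I = edgeIdeal K G)
    (k : ℕ) (hk : 1 ≤ k) :
    (I ^ (k * n + k)).colon ((Ideal.span {(∏ i : Fin (2 * n + 1), X (Sum.inl i)) ^ k} : Ideal (MvPolynomial (Fin (2 * n + 1) ⊕ Fin t) K)) : Set (MvPolynomial (Fin (2 * n + 1) ⊕ Fin t) K))
      = (Ideal.span (Set.range X)) ^ k := by
  subst hI
  set C : MvPolynomial (Fin (2 * n + 1) ⊕ Fin t) K :=
    ∏ i : Fin (2 * n + 1), X (Sum.inl i) with hCdef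
  have hadj : ∀ i : Fin (2 * n + 1), G.Adj (Sum.inl i) (Sum.inl (i + 1)) := huni.2.2.1
  -- Key lemma: `X v * C ∈ I ^ (n+1)` for every vertex `v`.
  open Fin.CommRing in
  have keyv : ∀ v : Fin (2 * n + 1) ⊕ Fin t, X v * C ∈ (edgeIdeal K G) ^ (n + 1) := by
    intro v
    have hvi : ∃ i : Fin (2 * n + 1), G.Adj v (Sum.inl i) := by
      cases v with
      | inl j => exact ⟨j + 1, hadj j⟩
      | inr j => obtain ⟨i, hi⟩ := hdom j; exact ⟨i, hi.symm⟩
    obtain ⟨i, hvi⟩ := hvi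
    have hC : C = ∏ m ∈ Finset.range (2 * n + 1),
        X (Sum.inl (i + (m : Fin (2 * n + 1)))) := by
      rw [hCdef, Finset.prod_range]
      refine (Fintype.prod_equiv (Equiv.addLeft i) _ _ fun j => ?_).symm
      simp [Fin.cast_val_eq_self]
    rw [hC, Finset.prod_range_succ', aux_prod_range_two_mul]
    have h0 : X (Sum.inl (i + ((0:ℕ) : Fin (2*n+1))))
        = (X (Sum.inl i) : MvPolynomial (Fin (2 * n + 1) ⊕ Fin t) K) := by
      norm_num
    rw [h0, ← mul_assoc, mul_comm (X v) _, mul_assoc, mul_comm _ (X v * X (Sum.inl i))]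
    have h1 : X v * X (Sum.inl i) ∈ edgeIdeal K G :=
      Ideal.subset_span ⟨v, Sum.inl i, hvi, rfl⟩
    have h2 : ∏ m ∈ Finset.range n,
        (X (Sum.inl (i + ((2*m+1 : ℕ) : Fin (2*n+1)))) *
          X (Sum.inl (i + ((2*m+1+1 : ℕ) : Fin (2*n+1))))
            : MvPolynomial (Fin (2 * n + 1) ⊕ Fin t) K)
          ∈ (edgeIdeal K G) ^ n := by
      refine aux_prod_range_mem_pow _ n _ fun m _ => ?_
      have hcast : (((2*m+1+1 : ℕ)) : Fin (2*n+1)) = ((2*m+1 : ℕ) : Fin (2*n+1)) + 1 := by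
        push_cast
        ring
      rw [hcast, ← add_assoc]
      exact Ideal.subset_span ⟨_, _, hadj (i + ((2*m+1 : ℕ) : Fin (2*n+1))), rfl⟩
    rw [pow_succ']
    exact Ideal.mul_mem_mul h1 h2
  -- monomials of degree k times C^k lie in I^(k(n+1))
  have keymon : ∀ (k : ℕ) (d : (Fin (2 * n + 1) ⊕ Fin t) →₀ ℕ), d.sum (fun _ m => m) = k →
      monomial d (1:K) * C ^ k ∈ (edgeIdeal K G) ^ (k * (n + 1)) := by
    intro k
    induction k with
    | zero =>
      intro d hd
      rw [aux_deg_zero d hd]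
      simp
    | succ k ih =>
      intro d hd
      have hne : d ≠ 0 := by
        intro h; subst h; simp at hd
      obtain ⟨u, hu⟩ := Finsupp.ne_iff.1 hne
      simp only [Finsupp.coe_zero, Pi.zero_apply] at hu
      have hle : Finsupp.single u 1 ≤ d := by
        refine Finsupp.le_def.2 fun j => ?_
        rcases eq_or_ne j u with rfl | hj
        · simpa using Nat.one_le_iff_ne_zero.2 hu
        · simp [Finsupp.single_apply, hj.symm]
      have heq : (d - Finsupp.single u 1) + Finsupp.single u 1 = d := by
        ext a; have := Finsupp.le_def.1 hle a
        simp [Nat.sub_add_cancel this]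
      have hsum : (d - Finsupp.single u 1).sum (fun _ m => m) = k := by
        have := aux_deg_add (d - Finsupp.single u 1) (Finsupp.single u 1)
        rw [heq] at this
        simp only [Finsupp.sum_single_index] at this
        omega
      have hmono : monomial d (1:K) = monomial (d - Finsupp.single u 1) 1 * X u := by
        rw [aux_X_eq, monomial_mul, heq, mul_one]
      have hsplit : monomial d (1:K) * C ^ (k+1)
          = (monomial (d - Finsupp.single u 1) 1 * C ^ k) * (X u * C) := by
        rw [hmono, pow_succ]; ring
      rw [hsplit, show (k+1) * (n+1) = k * (n+1) + (n+1) by ring, pow_add]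
      exact Ideal.mul_mem_mul (ih _ hsum) (keyv u)
  -- Now the two inclusions.
  apply le_antisymm
  · -- colon ≤ m^k
    intro f hf
    rw [Ideal.mem_colon_span_singleton] at hf
    have hIm : edgeIdeal K G
        ≤ (Ideal.span (Set.range (X : (Fin (2 * n + 1) ⊕ Fin t) →
            MvPolynomial (Fin (2 * n + 1) ⊕ Fin t) K))) ^ 2 := by
      rw [edgeIdeal, Ideal.span_le]
      rintro _ ⟨u, v, huv, rfl⟩
      rw [SetLike.mem_coe, sq]
      exact Ideal.mul_mem_mul (Ideal.subset_span ⟨u, rfl⟩) (Ideal.subset_span ⟨v, rfl⟩)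
    have hfm : f * C ^ k ∈ (Ideal.span (Set.range (X : (Fin (2 * n + 1) ⊕ Fin t) →
        MvPolynomial (Fin (2 * n + 1) ⊕ Fin t) K))) ^ (2 * (k*n+k)) := by
      have h2 := (pow_le_pow_left' hIm (k*n+k)) hf
      rwa [← pow_mul] at h2
    rw [aux_mem_max_pow_iff] at hfm ⊢
    -- C^k is the monomial with exponent k • D
    set D : (Fin (2 * n + 1) ⊕ Fin t) →₀ ℕ :=
      ∑ i : Fin (2*n+1), Finsupp.single (Sum.inl i) 1 with hD
    have hCD : C = monomial D (1:K) := aux_prod_X _ _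
    have hCk : C ^ k = monomial (k • D) (1:K) := by
      rw [hCD, monomial_pow, one_pow]
    have hdegD : D.sum (fun _ m => m) = 2*n+1 := by
      rw [hD]
      classical
      have hgen : ∀ s : Finset (Fin (2*n+1)),
          ((∑ i ∈ s, Finsupp.single (Sum.inl i : Fin (2 * n + 1) ⊕ Fin t) 1).sum
            (fun _ m => m)) = s.card := by
        intro s
        induction s using Finset.induction_on with
        | empty => simp
        | insert _ _ hni ih =>
          rw [Finset.sum_insert hni, aux_deg_add, ih, Finset.card_insert_of_notMem hni]
          simp [add_comm]
      rw [hgen]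
      simp
    intro d hd
    have hdsup : d + k • D ∈ (f * C ^ k).support := by
      rw [mem_support_iff, hCk, coeff_mul_monomial, mul_one]
      exact mem_support_iff.1 hd
    have hge := hfm _ hdsup
    rw [aux_deg_add, aux_deg_smul, hdegD] at hge
    have hkey : k * (2*n+1) + k = 2*(k*n+k) := by ring
    omega
  · -- m^k ≤ colon
    rw [aux_span_range_X_pow, Ideal.span_le]
    rintro _ ⟨d, hd, rfl⟩
    rw [SetLike.mem_coe, Ideal.mem_colon_span_singleton]
    simp only [Set.mem_setOf_eq] at hd
    have hmem := keymon k d hd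
    rw [show k * (n+1) = k*n + k by ring] at hmem
    simpa using hmem
end
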